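/- For every n ≥ 1 and every z in the closed unit disk, the Newton approximants satisfy |F_n(z) - √(1-z)| ≤ (2/√π)·|z|^{2^n}/√(2^n - 1), and the Halley approximants satisfy |G_n(z) - √(1-z)| ≤ (2/√π)·|z|^{3^n}/√(3^n - 1). -/

import Mathlib

noncomputable def Fc (z : ℂ) : ℕ → ℂ
  | 0 => 1
  | n + 1 => (Fc z n + (1 - z) / Fc z n) / 2

noncomputable def Gc (z : ℂ) : ℕ → ℂ
  | 0 => 1
  | n + 1 => Gc z n * ((Gc z n) ^ 2 + 3 * (1 - z)) / (3 * (Gc z n) ^ 2 + 1 - z)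

/-!
Write `s = √(1 - z)` and `C(w) = s (1 + w) / (1 - w)`. Newton's map `F ↦ (F + s² / F) / 2` and
Halley's map are conjugated by `C` to `w ↦ w²` and `w ↦ w³`, and `C(r) = 1` for
`r = (1 - s) / (1 + s) = z / (1 + s)²`. Hence `F_n = C(r ^ N)` with `N = 2 ^ n` (resp. `3 ^ n`) and
`F_n - s = 2 s r ^ N / (1 - r ^ N)`. Since `Re (1 - z) ≥ 0`, the principal root satisfies
`|s| ≤ √2 Re s`, so `|1 + s|² ≥ 1 + √2 |s|`; Bernoulli's inequality for `|1 + s|^(2N)` then bounds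
the error by `√2 |z| ^ N / N`, which is below `(2 / √π) |z| ^ N / √(N - 1)`.
At `z = 1` the conjugation breaks down (`s = 0`), but there `F_n = 2⁻ⁿ` and `G_n = 3⁻ⁿ` directly.
-/

lemma sqrt_two_mul_div_le {x : ℝ} (hx : 1 < x) {t : ℝ} (ht : 0 ≤ t) :
    √2 * t / x ≤ 2 / √Real.pi * t / √(x - 1) := by
  have hpi : 0 < √Real.pi := Real.sqrt_pos.mpr Real.pi_pos
  have hx1 : 0 < √(x - 1) := Real.sqrt_pos.mpr (by linarith)
  -- `2π(x - 1) ≤ 8(x - 1) ≤ 4x²`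
  have key : √2 * (√Real.pi * √(x - 1)) ≤ 2 * x := by
    rw [← Real.sqrt_mul Real.pi_pos.le, ← Real.sqrt_mul zero_le_two,
      Real.sqrt_le_left (by linarith)]
    nlinarith [Real.pi_le_four]
  rw [div_mul_eq_mul_div, div_div, div_le_div_iff₀ (by linarith) (by positivity)]
  nlinarith

lemma two_mul_div_one_sub_pow_le {a b t : ℝ} (ha : 0 < a) (hb : 1 + √2 * a ≤ b)
    (ht₀ : 0 ≤ t) (ht₁ : t ≤ 1) {N : ℕ} (hN : 1 ≤ N) :
    2 * a * (t / b) ^ N / (1 - (t / b) ^ N) ≤ √2 * t ^ N / N := by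
  have hsqrt2 : √2 * √2 = 2 := Real.mul_self_sqrt zero_le_two
  have hbN : 1 + N * (√2 * a) ≤ b ^ N :=
    (one_add_mul_le_pow (by nlinarith [Real.sqrt_nonneg 2]) N).trans
      (pow_le_pow_left₀ (by positivity) hb N)
  have htN : t ^ N ≤ 1 := pow_le_one₀ ht₀ ht₁
  have hNa : 0 < N * (√2 * a) := by
    have : (0 : ℝ) < N := by exact_mod_cast hN
    positivity
  have hb0 : 0 < b ^ N := by linarith
  rw [div_pow, one_sub_div hb0.ne', mul_div_assoc, div_div_div_cancel_right₀ hb0.ne',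
    ← mul_div_assoc, div_le_div_iff₀ (by linarith) (by positivity)]
  calc 2 * a * t ^ N * N = √2 * t ^ N * (N * (√2 * a)) := by
        linear_combination -(t ^ N * N * a) * hsqrt2
    _ ≤ √2 * t ^ N * (b ^ N - t ^ N) := by gcongr; linarith

lemma norm_le_sqrt_two_mul_re {s : ℂ} (hre : 0 ≤ s.re) (hsq : 0 ≤ (s ^ 2).re) :
    ‖s‖ ≤ √2 * s.re := by
  rw [sq, Complex.mul_re] at hsq
  rw [← Real.sqrt_sq (by positivity : 0 ≤ √2 * s.re), Complex.norm_def]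
  apply Real.sqrt_le_sqrt
  rw [Complex.normSq_apply, mul_pow, Real.sq_sqrt zero_le_two]
  nlinarith

lemma re_cpow_one_div_two_nonneg (u : ℂ) : 0 ≤ (u ^ ((1 : ℂ) / 2)).re := by
  rcases eq_or_ne u 0 with rfl | hu
  · simp [Complex.zero_cpow]
  have him : (Complex.log u * (1 / 2)).im = u.arg / 2 := by
    simp [Complex.mul_im, Complex.log_im, div_eq_mul_inv]
  rw [Complex.cpow_def_of_ne_zero hu, Complex.exp_re, him]
  refine mul_nonneg (Real.exp_pos _).le (Real.cos_nonneg_of_neg_pi_div_two_le_of_le ?_ ?_)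
  · linarith [Complex.neg_pi_lt_arg u]
  · linarith [Complex.arg_le_pi u]

lemma cpow_one_div_two_sq (u : ℂ) : (u ^ ((1 : ℂ) / 2)) ^ 2 = u := by
  simp

lemma norm_cpow_one_div_two_le {u : ℂ} (hu : 0 ≤ u.re) :
    ‖u ^ ((1 : ℂ) / 2)‖ ≤ √2 * (u ^ ((1 : ℂ) / 2)).re :=
  norm_le_sqrt_two_mul_re (re_cpow_one_div_two_nonneg u) (by rwa [cpow_one_div_two_sq])

lemma one_add_sqrt_two_mul_norm_le {s : ℂ} (hre : ‖s‖ ≤ √2 * s.re) :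
    1 + √2 * ‖s‖ ≤ ‖1 + s‖ ^ 2 := by
  have hsqrt2 : √2 * √2 = 2 := Real.mul_self_sqrt zero_le_two
  rw [Complex.sq_norm, Complex.normSq_add, Complex.normSq_one, ← Complex.sq_norm]
  simp only [one_mul, Complex.conj_re]
  have := mul_le_mul_of_nonneg_left hre (Real.sqrt_nonneg 2)
  rw [← mul_assoc, hsqrt2] at this
  linarith [sq_nonneg ‖s‖]

noncomputable def cayley (s w : ℂ) : ℂ := s * (1 + w) / (1 - w)

section Cayley

variable {s w : ℂ}

lemma one_sub_pow_ne_zero (hw : ‖w‖ < 1) {k : ℕ} (hk : k ≠ 0) : 1 - w ^ k ≠ 0 := by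
  refine sub_ne_zero.mpr fun h => ?_
  have := pow_lt_one₀ (norm_nonneg w) hw hk
  rw [← norm_pow, ← h, norm_one] at this
  exact lt_irrefl _ this

lemma cayley_newton (hs : s ≠ 0) (hw : 1 - w ^ 2 ≠ 0) :
    (cayley s w + s ^ 2 / cayley s w) / 2 = cayley s (w ^ 2) := by
  have h : (1 - w) * (1 + w) ≠ 0 := by convert hw using 1; ring
  have h₁ := left_ne_zero_of_mul h
  have h₂ := right_ne_zero_of_mul h
  unfold cayley
  field_simp
  ring

lemma cayley_halley (hs : s ≠ 0) (hw : 1 - w ^ 3 ≠ 0) :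
    cayley s w * (cayley s w ^ 2 + 3 * s ^ 2) / (3 * cayley s w ^ 2 + s ^ 2) =
      cayley s (w ^ 3) := by
  have h : (1 - w) * (1 + w + w ^ 2) ≠ 0 := by convert hw using 1; ring
  have h₁ := left_ne_zero_of_mul h
  have h₂ := right_ne_zero_of_mul h
  have hden : 3 * cayley s w ^ 2 + s ^ 2 = 4 * s ^ 2 * (1 + w + w ^ 2) / (1 - w) ^ 2 := by
    unfold cayley; field_simp; ring
  rw [hden]
  unfold cayley
  field_simp
  ring

lemma cayley_one_sub_div_one_add (hs : s ≠ 0) (h : 1 + s ≠ 0) :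
    cayley s ((1 - s) / (1 + s)) = 1 := by
  unfold cayley
  field_simp
  rw [show 1 + s - (1 - s) = 2 * s by ring, div_eq_one_iff_eq (mul_ne_zero two_ne_zero hs)]
  ring

lemma norm_cayley_sub_self_le (hw : ‖w‖ < 1) :
    ‖cayley s w - s‖ ≤ 2 * ‖s‖ * ‖w‖ / (1 - ‖w‖) := by
  have hw₁ : 1 - w ≠ 0 := by simpa using one_sub_pow_ne_zero hw one_ne_zero
  have : cayley s w - s = 2 * s * w / (1 - w) := by
    unfold cayley; field_simp; ring
  rw [this, norm_div, norm_mul, norm_mul, Complex.norm_two]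
  gcongr
  simpa using norm_sub_norm_le (1 : ℂ) w

end Cayley

section Closed

variable {z s r : ℂ}

lemma Fc_eq_cayley (hsz : s ^ 2 = 1 - z) (hs : s ≠ 0) (hr : ‖r‖ < 1) (h₀ : cayley s r = 1)
    (n : ℕ) : Fc z n = cayley s (r ^ 2 ^ n) := by
  induction n with
  | zero => simpa [Fc] using h₀.symm
  | succ n ih =>
    have hw : 1 - (r ^ 2 ^ n) ^ 2 ≠ 0 := by
      rw [← pow_mul]; exact one_sub_pow_ne_zero hr (by positivity)
    rw [Fc, ih, ← hsz, cayley_newton hs hw, ← pow_mul, ← pow_succ]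

lemma Gc_eq_cayley (hsz : s ^ 2 = 1 - z) (hs : s ≠ 0) (hr : ‖r‖ < 1) (h₀ : cayley s r = 1)
    (n : ℕ) : Gc z n = cayley s (r ^ 3 ^ n) := by
  induction n with
  | zero => simpa [Gc] using h₀.symm
  | succ n ih =>
    have hw : 1 - (r ^ 3 ^ n) ^ 3 ≠ 0 := by
      rw [← pow_mul]; exact one_sub_pow_ne_zero hr (by positivity)
    rw [Gc, add_sub_assoc, ih, ← hsz, cayley_halley hs hw, ← pow_mul, ← pow_succ]

lemma Fc_one (n : ℕ) : Fc 1 n = (2 ^ n)⁻¹ := by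
  induction n with
  | zero => simp [Fc]
  | succ n ih => rw [Fc, ih, sub_self, zero_div, add_zero, pow_succ, mul_inv, div_eq_mul_inv]

lemma Gc_one (n : ℕ) : Gc 1 n = (3 ^ n)⁻¹ := by
  induction n with
  | zero => simp [Gc]
  | succ n ih =>
    rw [Gc, ih, sub_self, mul_zero, add_zero, add_sub_cancel_right, pow_succ]
    field_simp
    ring

end Closed

section Error

variable {z s : ℂ}

lemma one_lt_norm_one_add_sq (hs : s ≠ 0) (hre : ‖s‖ ≤ √2 * s.re) : 1 < ‖1 + s‖ ^ 2 := by
  have := one_add_sqrt_two_mul_norm_le hre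
  have : 0 < √2 * ‖s‖ := mul_pos (by positivity) (norm_pos_iff.mpr hs)
  linarith

lemma norm_one_sub_div_one_add (hsz : s ^ 2 = 1 - z) :
    ‖(1 - s) / (1 + s)‖ = ‖z‖ / ‖1 + s‖ ^ 2 := by
  rw [show z = (1 - s) * (1 + s) by linear_combination hsz, norm_mul, norm_div]
  field_simp

lemma norm_one_sub_div_one_add_lt_one (hsz : s ^ 2 = 1 - z) (hs : s ≠ 0)
    (hre : ‖s‖ ≤ √2 * s.re) (hz : ‖z‖ ≤ 1) : ‖(1 - s) / (1 + s)‖ < 1 := by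
  have := one_lt_norm_one_add_sq hs hre
  rw [norm_one_sub_div_one_add hsz, div_lt_one (by linarith)]
  linarith

lemma norm_cayley_pow_sub_le (hsz : s ^ 2 = 1 - z) (hs : s ≠ 0) (hre : ‖s‖ ≤ √2 * s.re)
    (hz : ‖z‖ ≤ 1) {N : ℕ} (hN : 1 ≤ N) :
    ‖cayley s (((1 - s) / (1 + s)) ^ N) - s‖ ≤ √2 * ‖z‖ ^ N / N := by
  have hrN : ‖((1 - s) / (1 + s)) ^ N‖ < 1 := by
    rw [norm_pow]
    exact pow_lt_one₀ (norm_nonneg _) (norm_one_sub_div_one_add_lt_one hsz hs hre hz) (by omega)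
  calc ‖cayley s (((1 - s) / (1 + s)) ^ N) - s‖
      ≤ 2 * ‖s‖ * ‖((1 - s) / (1 + s)) ^ N‖ / (1 - ‖((1 - s) / (1 + s)) ^ N‖) :=
        norm_cayley_sub_self_le hrN
    _ = 2 * ‖s‖ * (‖z‖ / ‖1 + s‖ ^ 2) ^ N / (1 - (‖z‖ / ‖1 + s‖ ^ 2) ^ N) := by
        rw [norm_pow, norm_one_sub_div_one_add hsz]
    _ ≤ √2 * ‖z‖ ^ N / N :=
        two_mul_div_one_sub_pow_le (norm_pos_iff.mpr hs) (one_add_sqrt_two_mul_norm_le hre)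
          (norm_nonneg z) hz hN

lemma norm_sub_cpow_le_of_cayley (hz : ‖z‖ ≤ 1) (hz₁ : z ≠ 1) {x : ℂ} {N : ℕ} (hN : 1 ≤ N)
    (hx : ∀ s r : ℂ, s ^ 2 = 1 - z → s ≠ 0 → ‖r‖ < 1 → cayley s r = 1 → x = cayley s (r ^ N)) :
    ‖x - (1 - z) ^ ((1 : ℂ) / 2)‖ ≤ √2 * ‖z‖ ^ N / N := by
  set s := (1 - z) ^ ((1 : ℂ) / 2)
  have hsz : s ^ 2 = 1 - z := cpow_one_div_two_sq _
  have hs : s ≠ 0 := by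
    rw [Ne, Complex.cpow_eq_zero_iff, sub_eq_zero]
    exact fun h => hz₁ h.1.symm
  have hre : ‖s‖ ≤ √2 * s.re := by
    refine norm_cpow_one_div_two_le ?_
    rw [Complex.sub_re, Complex.one_re, sub_nonneg]
    exact (Complex.re_le_norm z).trans hz
  have h1s : 1 + s ≠ 0 := by
    have := one_lt_norm_one_add_sq hs hre
    rintro h
    norm_num [h] at this
  rw [hx s _ hsz hs (norm_one_sub_div_one_add_lt_one hsz hs hre hz)
    (cayley_one_sub_div_one_add hs h1s)]
  exact norm_cayley_pow_sub_le hsz hs hre hz hN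

end Error

lemma norm_Fc_sub_cpow_le {z : ℂ} (hz : ‖z‖ ≤ 1) (n : ℕ) :
    ‖Fc z n - (1 - z) ^ ((1 : ℂ) / 2)‖ ≤ √2 * ‖z‖ ^ 2 ^ n / 2 ^ n := by
  rcases eq_or_ne z 1 with rfl | hz₁
  · simp [Fc_one, div_eq_mul_inv]
  · exact_mod_cast norm_sub_cpow_le_of_cayley hz hz₁ Nat.one_le_two_pow
      fun _ _ hsz hs hr h₀ => Fc_eq_cayley hsz hs hr h₀ n

lemma norm_Gc_sub_cpow_le {z : ℂ} (hz : ‖z‖ ≤ 1) (n : ℕ) :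
    ‖Gc z n - (1 - z) ^ ((1 : ℂ) / 2)‖ ≤ √2 * ‖z‖ ^ 3 ^ n / 3 ^ n := by
  rcases eq_or_ne z 1 with rfl | hz₁
  · simp [Gc_one, div_eq_mul_inv]
  · exact_mod_cast norm_sub_cpow_le_of_cayley hz hz₁ (Nat.one_le_pow _ _ three_pos)
      fun _ _ hsz hs hr h₀ => Gc_eq_cayley hsz hs hr h₀ n

theorem stmt19 (n : ℕ) (hn : 1 ≤ n) (z : ℂ) (hz : ‖z‖ ≤ 1) :
    ‖Fc z n - (1 - z) ^ ((1 : ℂ) / 2)‖ ≤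
      2 / Real.sqrt Real.pi * ‖z‖ ^ (2 ^ n) / Real.sqrt (2 ^ n - 1) ∧
    ‖Gc z n - (1 - z) ^ ((1 : ℂ) / 2)‖ ≤
      2 / Real.sqrt Real.pi * ‖z‖ ^ (3 ^ n) / Real.sqrt (3 ^ n - 1) := by
  have hn₀ : n ≠ 0 := by omega
  exact ⟨(norm_Fc_sub_cpow_le hz n).trans
      (sqrt_two_mul_div_le (one_lt_pow₀ one_lt_two hn₀) (by positivity)),
    (norm_Gc_sub_cpow_le hz n).trans
      (sqrt_two_mul_div_le (one_lt_pow₀ (by norm_num) hn₀) (by positivity))⟩
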